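/- Let G be a frame and λ : X × Y → G, λ' : X' × Y' → G ℓ-relations. Define the product λ ⊠ λ' : (X × X') × (Y × Y') → G by (λ ⊠ λ')((a,a'),(b,b')) = λ(a,b) ⊓ λ'(a',b'). Then each of the four axioms ed), uv), su), in) holds for λ ⊠ λ' whenever it holds for both λ and λ'. In particular, the product of two ℓ-bijections is an ℓ-bijection. -/
import Mathlib


/-- Everywhere defined. -/
def IsED {A B G : Type*} [CompleteLattice G] (μ : A → B → G) : Prop :=
  ∀ a : A, (⨆ b : B, μ a b) = ⊤

/-- Univalued. -/
def IsUV {A B G : Type*} [CompleteLattice G] (μ : A → B → G) : Prop :=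
  ∀ (a : A) (b₁ b₂ : B), b₁ ≠ b₂ → μ a b₁ ⊓ μ a b₂ = ⊥

/-- Surjective. -/
def IsSU {A B G : Type*} [CompleteLattice G] (μ : A → B → G) : Prop :=
  ∀ b : B, (⨆ a : A, μ a b) = ⊤

/-- Injective. -/
def IsIN {A B G : Type*} [CompleteLattice G] (μ : A → B → G) : Prop :=
  ∀ (b : B) (a₁ a₂ : A), a₁ ≠ a₂ → μ a₁ b ⊓ μ a₂ b = ⊥

/-- ℓ-bijection: all four axioms. -/
def IsLBijection {A B G : Type*} [CompleteLattice G] (μ : A → B → G) : Prop :=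
  IsED μ ∧ IsUV μ ∧ IsSU μ ∧ IsIN μ


private lemma iSup_prod_inf {G : Type*} [Order.Frame G] {Y Y' : Type*}
    (f : Y → G) (g : Y' → G) :
    (⨆ b : Y × Y', f b.1 ⊓ g b.2) = (⨆ b, f b) ⊓ (⨆ b', g b') := by
  rw [iSup_prod, iSup_inf_eq]
  exact iSup_congr fun b => (inf_iSup_eq (f b) g).symm

/-- Each of the four axioms passes to the product ℓ-relation; in particular
the product of two ℓ-bijections is an ℓ-bijection. -/
theorem product_lrelation_axioms {X X' Y Y' G : Type*} [Order.Frame G]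
    (lam : X → Y → G) (lam' : X' → Y' → G) :
    (IsED lam → IsED lam' →
      IsED (fun (a : X × X') (b : Y × Y') => lam a.1 b.1 ⊓ lam' a.2 b.2)) ∧
    (IsUV lam → IsUV lam' →
      IsUV (fun (a : X × X') (b : Y × Y') => lam a.1 b.1 ⊓ lam' a.2 b.2)) ∧
    (IsSU lam → IsSU lam' →
      IsSU (fun (a : X × X') (b : Y × Y') => lam a.1 b.1 ⊓ lam' a.2 b.2)) ∧
    (IsIN lam → IsIN lam' →
      IsIN (fun (a : X × X') (b : Y × Y') => lam a.1 b.1 ⊓ lam' a.2 b.2)) ∧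
    (IsLBijection lam → IsLBijection lam' →
      IsLBijection (fun (a : X × X') (b : Y × Y') => lam a.1 b.1 ⊓ lam' a.2 b.2)) := by
  have hED : IsED lam → IsED lam' →
      IsED (fun (a : X × X') (b : Y × Y') => lam a.1 b.1 ⊓ lam' a.2 b.2) := by
    intro h h' a
    rw [iSup_prod_inf (fun y => lam a.1 y) (fun y' => lam' a.2 y'), h a.1, h' a.2, top_inf_eq]
  have hUV : IsUV lam → IsUV lam' →
      IsUV (fun (a : X × X') (b : Y × Y') => lam a.1 b.1 ⊓ lam' a.2 b.2) := by
    intro h h' a b₁ b₂ hne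
    rcases not_and_or.mp (fun hp => hne (Prod.ext hp.1 hp.2) :
        ¬(b₁.1 = b₂.1 ∧ b₁.2 = b₂.2)) with h1 | h2
    · exact le_bot_iff.mp (le_trans (inf_le_inf inf_le_left inf_le_left)
        (le_of_eq (h a.1 b₁.1 b₂.1 h1)))
    · exact le_bot_iff.mp (le_trans (inf_le_inf inf_le_right inf_le_right)
        (le_of_eq (h' a.2 b₁.2 b₂.2 h2)))
  have hSU : IsSU lam → IsSU lam' →
      IsSU (fun (a : X × X') (b : Y × Y') => lam a.1 b.1 ⊓ lam' a.2 b.2) := by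
    intro h h' b
    rw [iSup_prod_inf (fun x => lam x b.1) (fun x' => lam' x' b.2), h b.1, h' b.2, top_inf_eq]
  have hIN : IsIN lam → IsIN lam' →
      IsIN (fun (a : X × X') (b : Y × Y') => lam a.1 b.1 ⊓ lam' a.2 b.2) := by
    intro h h' b a₁ a₂ hne
    rcases not_and_or.mp (fun hp => hne (Prod.ext hp.1 hp.2) :
        ¬(a₁.1 = a₂.1 ∧ a₁.2 = a₂.2)) with h1 | h2
    · exact le_bot_iff.mp (le_trans (inf_le_inf inf_le_left inf_le_left)
        (le_of_eq (h b.1 a₁.1 a₂.1 h1)))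
    · exact le_bot_iff.mp (le_trans (inf_le_inf inf_le_right inf_le_right)
        (le_of_eq (h' b.2 a₁.2 a₂.2 h2)))
  exact ⟨hED, hUV, hSU, hIN, fun ⟨e, u, s, i⟩ ⟨e', u', s', i'⟩ =>
    ⟨hED e e', hUV u u', hSU s s', hIN i i'⟩⟩
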